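/- arXiv:2001.06905 — 3 statements merged into one kernel-verified Lean document; each statement's English description precedes it below -/
import Mathlib

section
/- Let B be a category with an initial object and all ω-colimits, and let T : A × B → B be an ω-cocontinuous functor. Then T has a parameterised initial algebra (T†, τ): a functor T† : A → B together with a natural isomorphism τ : T ∘ ⟨Id, T†⟩ ⇒ T† such that for every object A of A, (T†A, τ_A) is an initial algebra for the endofunctor T(A, −). Moreover T† is ω-cocontinuous. -/
/-!
`T†` is the colimit of the initial chain `0 → P 0 → P² 0 → ⋯` of the endofunctor
`P F = T ∘ ⟨Id, F⟩` of `A ⥤ B`, and `τ` is the Adámek structure map. Evaluation at `a`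
intertwines `P` with `T(a, −)` and preserves the initial object and ω-colimits, so it carries
this chain and its colimit to those of `T(a, −)`; Adámek's argument then makes `(T† a, τ_a)`
initial, and Lambek's lemma makes `τ` invertible. Every stage of the chain is ω-cocontinuous,
because constant functors preserve connected colimits, and colimits commute with colimits, so
`T†` is ω-cocontinuous as well.
-/

open CategoryTheory Limits

namespace CategoryTheory

section

variable {J : Type*} [Category J]

instance preservesColimitsOfShape_const_obj [IsConnected J] {C D : Type*} [Category C]
    [Category D] (X : D) : PreservesColimitsOfShape J ((Functor.const C).obj X) where
  preservesColimit := ⟨fun _ => ⟨isColimitConstCocone J X⟩⟩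

def isColimitOfIsColimitFstSnd {A B : Type*} [Category A] [Category B] {E : J ⥤ A × B}
    (c : Cocone E) (h₁ : IsColimit ((Prod.fst A B).mapCocone c))
    (h₂ : IsColimit ((Prod.snd A B).mapCocone c)) : IsColimit c where
  desc s := (h₁.desc ((Prod.fst A B).mapCocone s), h₂.desc ((Prod.snd A B).mapCocone s))
  fac s j := Prod.ext (h₁.fac ((Prod.fst A B).mapCocone s) j)
    (h₂.fac ((Prod.snd A B).mapCocone s) j)
  uniq s m hm := Prod.ext
    (h₁.uniq ((Prod.fst A B).mapCocone s) m.1 fun j => congrArg (fun f => f.1) (hm j))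
    (h₂.uniq ((Prod.snd A B).mapCocone s) m.2 fun j => congrArg (fun f => f.2) (hm j))

instance preservesColimitsOfShape_prod' {C A B : Type*} [Category C] [Category A] [Category B]
    (L : C ⥤ A) (R : C ⥤ B) [PreservesColimitsOfShape J L] [PreservesColimitsOfShape J R] :
    PreservesColimitsOfShape J (L.prod' R) where
  preservesColimit := ⟨fun hc =>
    ⟨isColimitOfIsColimitFstSnd _ (isColimitOfPreserves L hc) (isColimitOfPreserves R hc)⟩⟩

lemma preservesColimitsOfShape_colimit {K C D : Type*} [Category K] [Category C] [Category D]
    [HasColimitsOfShape J D] [HasColimitsOfShape K D] (F : J ⥤ C ⥤ D)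
    [∀ j, PreservesColimitsOfShape K (F.obj j)] : PreservesColimitsOfShape K (colimit F) := by
  have : PreservesColimitsOfShape K F.flip :=
    preservesColimitsOfShape_of_evaluation _ _ fun j =>
      preservesColimitsOfShape_of_natIso (flipCompEvaluation F j).symm
  exact preservesColimitsOfShape_of_natIso (colimitIsoFlipCompColim F).symm

end

namespace Endofunctor

section

variable {C : Type*} [Category C] (F : C ⥤ C)

def initialChainObj (X₀ : C) : ℕ → C
  | 0 => X₀
  | n + 1 => F.obj (initialChainObj X₀ n)

variable {X₀ : C} (h₀ : IsInitial X₀)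

def initialChainStep : ∀ n : ℕ, initialChainObj F X₀ n ⟶ initialChainObj F X₀ (n + 1)
  | 0 => h₀.to _
  | n + 1 => F.map (initialChainStep n)

def initialChain : ℕ ⥤ C := Functor.ofSequence (initialChainStep F h₀)

lemma initialChain_map_homOfLE_succ (n : ℕ) :
    (initialChain F h₀).map (homOfLE (n.le_add_right 1)) = initialChainStep F h₀ n :=
  Functor.ofSequence_map_homOfLE_succ _ n

def initialChainToAlgebra (x : Algebra F) : ∀ n : ℕ, initialChainObj F X₀ n ⟶ x.a
  | 0 => h₀.to _
  | n + 1 => F.map (initialChainToAlgebra x n) ≫ x.str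

lemma initialChainStep_comp_toAlgebra (x : Algebra F) (n : ℕ) :
    initialChainStep F h₀ n ≫ initialChainToAlgebra F h₀ x (n + 1) =
      initialChainToAlgebra F h₀ x n := by
  induction n with
  | zero => exact h₀.hom_ext _ _
  | succ n ih =>
    change F.map _ ≫ F.map _ ≫ x.str = F.map _ ≫ x.str
    rw [← F.map_comp_assoc, ih]

def initialChainCoconeOfAlgebra (x : Algebra F) : Cocone (initialChain F h₀) where
  pt := x.a
  ι := NatTrans.ofSequence (initialChainToAlgebra F h₀ x) fun n => by
    rw [initialChain_map_homOfLE_succ]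
    exact (initialChainStep_comp_toAlgebra F h₀ x n).trans (Category.comp_id _).symm

def initialChainShiftCocone (c : Cocone (initialChain F h₀)) :
    Cocone (initialChain F h₀ ⋙ F) where
  pt := c.pt
  ι := NatTrans.ofSequence (fun n => c.ι.app (n + 1)) fun n => by
    have hw := c.w (homOfLE ((n + 1).le_add_right 1))
    rw [initialChain_map_homOfLE_succ] at hw
    rw [Functor.comp_map, initialChain_map_homOfLE_succ]
    exact hw.trans (Category.comp_id _).symm

variable {c : Cocone (initialChain F h₀)}

lemma ι_comp_algebraHom_f {s : F.obj c.pt ⟶ c.pt}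
    (hs : ∀ n, F.map (c.ι.app n) ≫ s = c.ι.app (n + 1)) {x : Algebra F}
    (m : (⟨c.pt, s⟩ : Algebra F) ⟶ x) (n : ℕ) :
    c.ι.app n ≫ m.f = initialChainToAlgebra F h₀ x n := by
  induction n with
  | zero => exact h₀.hom_ext _ _
  | succ n ih =>
    have step : c.ι.app (n + 1) ≫ m.f = F.map (c.ι.app n) ≫ s ≫ m.f := by
      rw [← Category.assoc, hs n]; rfl
    rw [step, ← m.h, ← F.map_comp_assoc, ih]
    rfl

variable (hc : IsColimit c)

noncomputable def descToAlgebra (x : Algebra F) : c.pt ⟶ x.a :=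
  hc.desc (initialChainCoconeOfAlgebra F h₀ x)

lemma ι_comp_descToAlgebra (x : Algebra F) (n : ℕ) :
    c.ι.app n ≫ descToAlgebra F h₀ hc x = initialChainToAlgebra F h₀ x n :=
  hc.fac _ n

variable [PreservesColimitsOfShape ℕ F]

noncomputable def colimitAlgebraStr : F.obj c.pt ⟶ c.pt :=
  (isColimitOfPreserves F hc).desc (initialChainShiftCocone F h₀ c)

lemma map_ι_comp_colimitAlgebraStr (n : ℕ) :
    F.map (c.ι.app n) ≫ colimitAlgebraStr F h₀ hc = c.ι.app (n + 1) :=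
  (isColimitOfPreserves F hc).fac (initialChainShiftCocone F h₀ c) n

/-- Adámek's theorem. -/
noncomputable def isInitialAlgebraOfIsColimit (s : F.obj c.pt ⟶ c.pt)
    (hs : ∀ n, F.map (c.ι.app n) ≫ s = c.ι.app (n + 1)) :
    IsInitial (⟨c.pt, s⟩ : Algebra F) :=
  IsInitial.ofUniqueHom (fun x => ⟨descToAlgebra F h₀ hc x,
      (isColimitOfPreserves F hc).hom_ext fun n => by
        change F.map (c.ι.app n) ≫ _ = F.map (c.ι.app n) ≫ _
        rw [← F.map_comp_assoc, ι_comp_descToAlgebra, ← Category.assoc, hs]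
        exact (ι_comp_descToAlgebra F h₀ hc x (n + 1)).symm⟩)
    fun x m => Algebra.Hom.ext <| hc.hom_ext fun n => by
      rw [ι_comp_algebraHom_f F h₀ hs, ι_comp_descToAlgebra]

end

section

variable {C D : Type*} [Category C] [Category D] {F : C ⥤ C} {F' : D ⥤ D} (G : C ⥤ D)
  (e : F ⋙ G ≅ G ⋙ F') {X₀ : C} (h₀ : IsInitial X₀) (h₀' : IsInitial (G.obj X₀))

def initialChainObjMapIso :
    ∀ n : ℕ, (initialChain F' h₀').obj n ≅ G.obj ((initialChain F h₀).obj n)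
  | 0 => Iso.refl _
  | n + 1 => F'.mapIso (initialChainObjMapIso n) ≪≫ (e.app _).symm

lemma initialChainStep_comp_initialChainObjMapIso_hom (n : ℕ) :
    initialChainStep F' h₀' n ≫ (initialChainObjMapIso G e h₀ h₀' (n + 1)).hom =
      (initialChainObjMapIso G e h₀ h₀' n).hom ≫ G.map (initialChainStep F h₀ n) := by
  induction n with
  | zero => exact h₀'.hom_ext _ _
  | succ n ih =>
    change F'.map _ ≫ F'.map _ ≫ e.inv.app _ = (F'.map _ ≫ e.inv.app _) ≫ G.map (F.map _)
    rw [← F'.map_comp_assoc, ih]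
    exact (F'.map_comp_assoc _ _ _).trans
      ((congrArg _ (e.inv.naturality _)).trans (Category.assoc _ _ _).symm)

def initialChainMapHom : initialChain F' h₀' ⟶ initialChain F h₀ ⋙ G :=
  NatTrans.ofSequence (fun n => (initialChainObjMapIso G e h₀ h₀' n).hom) fun n => by
    rw [Functor.comp_map, initialChain_map_homOfLE_succ, initialChain_map_homOfLE_succ]
    exact initialChainStep_comp_initialChainObjMapIso_hom G e h₀ h₀' n

instance : IsIso (initialChainMapHom G e h₀ h₀') :=
  have (n : ℕ) : IsIso ((initialChainMapHom G e h₀ h₀').app n) :=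
    inferInstanceAs (IsIso (initialChainObjMapIso G e h₀ h₀' n).hom)
  NatIso.isIso_of_isIso_app _

variable [PreservesColimitsOfShape ℕ G] [PreservesColimitsOfShape ℕ F']

noncomputable def isInitialMapAlgebraOfIsColimit {c : Cocone (initialChain F h₀)}
    (hc : IsColimit c) (s : F.obj c.pt ⟶ c.pt)
    (hs : ∀ n, F.map (c.ι.app n) ≫ s = c.ι.app (n + 1))
    (s' : F'.obj (G.obj c.pt) ⟶ G.obj c.pt) (hs' : e.hom.app c.pt ≫ s' = G.map s) :
    IsInitial (⟨G.obj c.pt, s'⟩ : Algebra F') :=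
  isInitialAlgebraOfIsColimit F' h₀'
    ((IsColimit.precomposeHomEquiv (asIso (initialChainMapHom G e h₀ h₀')) _).symm
      (isColimitOfPreserves G hc)) s' fun n => by
    change F'.map ((initialChainObjMapIso G e h₀ h₀' n).hom ≫ G.map (c.ι.app n)) ≫ s' =
      (F'.map (initialChainObjMapIso G e h₀ h₀' n).hom ≫ e.inv.app _) ≫
        G.map (c.ι.app (n + 1))
    simp only [← hs n, Functor.map_comp, ← hs', Category.assoc]
    congr 1
    have nat := e.inv.naturality_assoc (c.ι.app n) (e.hom.app c.pt ≫ s')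
    simp only [Functor.comp_map, Functor.const_obj_obj, Iso.inv_hom_id_app_assoc] at nat
    exact nat

end

end Endofunctor

section

variable {A B : Type*} [Category A] [Category B] (T : A × B ⥤ B)

def paramEndofunctor : (A ⥤ B) ⥤ A ⥤ B where
  obj F := (𝟭 A).prod' F ⋙ T
  map η := Functor.whiskerRight (NatTrans.prod' (𝟙 (𝟭 A)) η) T
  map_id F := by ext a; exact T.map_id (a, F.obj a)
  map_comp η θ := by ext a; dsimp; rw [← T.map_comp]; congr 1; ext <;> simp

def paramEndofunctorCompEvaluationIso (a : A) :
    paramEndofunctor T ⋙ (evaluation A B).obj a ≅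
      (evaluation A B).obj a ⋙ ((Functor.const B).obj a).prod' (𝟭 B) ⋙ T :=
  NatIso.ofComponents (fun _ => Iso.refl _) fun _ =>
    (Category.comp_id _).trans (Category.id_comp _).symm

variable {J : Type*} [Category J] [IsConnected J] [PreservesColimitsOfShape J T]

lemma preservesColimitsOfShape_paramEndofunctor [HasColimitsOfShape J B] :
    PreservesColimitsOfShape J (paramEndofunctor T) :=
  preservesColimitsOfShape_of_evaluation _ _ fun a =>
    preservesColimitsOfShape_of_natIso (paramEndofunctorCompEvaluationIso T a).symm

lemma preservesColimitsOfShape_initialChain_obj_paramEndofunctor {X : B} (hX : IsInitial X) :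
    ∀ n : ℕ, PreservesColimitsOfShape J
      ((Endofunctor.initialChain (paramEndofunctor T) (Functor.isInitialConst A hX)).obj n)
  | 0 => inferInstanceAs (PreservesColimitsOfShape J ((Functor.const A).obj X))
  | n + 1 =>
    have := preservesColimitsOfShape_initialChain_obj_paramEndofunctor hX n
    inferInstanceAs (PreservesColimitsOfShape J ((𝟭 A).prod'
      ((Endofunctor.initialChain (paramEndofunctor T) (Functor.isInitialConst A hX)).obj n) ⋙ T))

end

end CategoryTheory

open CategoryTheory Endofunctor

/-- Let `B` be a category with an initial object and all ω-colimits and let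
`T : A × B ⥤ B` be ω-cocontinuous. Then `T` has a parameterised initial algebra
`(T†, τ)`: a functor `T† : A ⥤ B` with a natural isomorphism `τ : T ∘ ⟨Id, T†⟩ ≅ T†`
such that for every `a : A`, `(T† a, τ_a)` is an initial algebra for the endofunctor
`T(a, −)`. Moreover `T†` is ω-cocontinuous. -/
theorem parameterised_initial_algebra_exists
    {A : Type u₁} [Category.{v₁} A] {B : Type u₂} [Category.{v₂} B]
    [HasInitial B] [HasColimitsOfShape ℕ B]
    (T : A × B ⥤ B) [PreservesColimitsOfShape ℕ T] :
    ∃ (Tdag : A ⥤ B) (τ : Functor.prod' (𝟭 A) Tdag ⋙ T ≅ Tdag),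
      (∀ a : A, Nonempty (IsInitial
        (⟨Tdag.obj a, τ.hom.app a⟩ :
          Endofunctor.Algebra (Functor.prod' ((Functor.const B).obj a) (𝟭 B) ⋙ T)))) ∧
      Nonempty (PreservesColimitsOfShape ℕ Tdag) := by
  have := preservesColimitsOfShape_paramEndofunctor (J := ℕ) T
  have := preservesColimitsOfShape_initialChain_obj_paramEndofunctor (J := ℕ) T initialIsInitial
  let h₀ := Functor.isInitialConst A (initialIsInitial (C := B))
  let D := initialChain (paramEndofunctor T) h₀
  let hc := colimit.isColimit D
  let τ := colimitAlgebraStr (paramEndofunctor T) h₀ hc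
  have initial (a : A) : IsInitial (⟨(colimit D).obj a, τ.app a⟩ :
      Algebra (((Functor.const B).obj a).prod' (𝟭 B) ⋙ T)) :=
    isInitialMapAlgebraOfIsColimit ((evaluation A B).obj a)
      (paramEndofunctorCompEvaluationIso T a) h₀ initialIsInitial hc τ
      (map_ι_comp_colimitAlgebraStr _ h₀ hc) (τ.app a) (Category.id_comp _)
  have (a : A) : IsIso (τ.app a) := Algebra.Initial.str_isIso (initial a)
  have : IsIso τ := NatIso.isIso_of_isIso_app τ
  exact ⟨colimit D, (asIso τ : (paramEndofunctor T).obj (colimit D) ≅ _),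
    fun a => ⟨initial a⟩, ⟨preservesColimitsOfShape_colimit D⟩⟩
end

section
/- In the operational semantics of the first-order affine language (QPL fragment), subject reduction holds: if (M | V) is a well-formed configuration with Γ; Σ ⊢ (M | V) and (M | V) ⤳ (M' | V'), then there exists a (necessarily unique) context Γ' such that Γ'; Σ ⊢ (M' | V'). -/
/-! Syntax and operational semantics of the first-order affine language (QPL fragment). -/

/-- Types with `n` free type variables (de Bruijn, the newly bound variable of `μ`
is the last one), over a set `α` of atomic types. -/
inductive Ty (α : Type) : ℕ → Type
  | var {n} (i : Fin n) : Ty α n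
  | unit {n} : Ty α n
  | atom {n} (a : α) : Ty α n
  | sum {n} (A B : Ty α n) : Ty α n
  | tensor {n} (A B : Ty α n) : Ty α n
  | mu {n} (A : Ty α (n + 1)) : Ty α n

namespace Ty

/-- Renaming of type variables. -/
def rename {α} : {n m : ℕ} → (Fin n → Fin m) → Ty α n → Ty α m
  | _, _, ρ, .var i => .var (ρ i)
  | _, _, _, .unit => .unit
  | _, _, _, .atom a => .atom a
  | _, _, ρ, .sum A B => .sum (A.rename ρ) (B.rename ρ)
  | _, _, ρ, .tensor A B => .tensor (A.rename ρ) (B.rename ρ)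
  | _, _, ρ, .mu A => .mu (A.rename (fun i =>
      Fin.lastCases (Fin.last _) (fun j => (ρ j).castSucc) i))

/-- Parallel substitution of type variables. -/
def subst {α} : {n m : ℕ} → (Fin n → Ty α m) → Ty α n → Ty α m
  | _, _, σ, .var i => σ i
  | _, _, _, .unit => .unit
  | _, _, _, .atom a => .atom a
  | _, _, σ, .sum A B => .sum (A.subst σ) (B.subst σ)
  | _, _, σ, .tensor A B => .tensor (A.subst σ) (B.subst σ)
  | _, _, σ, .mu A => .mu (A.subst (fun i =>
      Fin.lastCases (.var (Fin.last _)) (fun j => (σ j).rename Fin.castSucc) i))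

/-- Substitution `A[B/X]` of `B` for the last type variable of `A`. -/
def subst1 {α} {n : ℕ} (A : Ty α (n + 1)) (B : Ty α n) : Ty α n :=
  A.subst (fun i => Fin.lastCases B (fun j => .var j) i)

/-- The type `bit := I + I`. -/
def bit {α} : Ty α 0 := .sum .unit .unit

end Ty

/-- Values. -/
inductive Val (α : Type) : Type
  | star
  | inl (A B : Ty α 0) (v : Val α)
  | inr (A B : Ty α 0) (v : Val α)
  | pair (v w : Val α)
  | fold (A : Ty α 1) (v : Val α)

/-- Well-formed values `⊢ v : A`. -/
inductive Val.HasTy {α} : Val α → Ty α 0 → Prop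
  | star : Val.HasTy .star .unit
  | inl {v A B} : Val.HasTy v A → Val.HasTy (.inl A B v) (.sum A B)
  | inr {v A B} : Val.HasTy v B → Val.HasTy (.inr A B v) (.sum A B)
  | pair {v w A B} : Val.HasTy v A → Val.HasTy w B → Val.HasTy (.pair v w) (.tensor A B)
  | fold {v A} : Val.HasTy v (A.subst1 (.mu A)) → Val.HasTy (.fold A v) (.mu A)

/-- Terms (term variables are natural numbers). -/
inductive Tm (α : Type) : Type
  | newunit (u : ℕ)                                        -- new unit u
  | discard (x : ℕ)                                        -- discard x
  | seq (M N : Tm α)                                       -- M ; N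
  | skip
  | whileLoop (b : ℕ) (M : Tm α)                           -- while b do M
  | letLeft (y : ℕ) (A B : Ty α 0) (x : ℕ)                 -- y = left_{A,B} x
  | letRight (y : ℕ) (A B : Ty α 0) (x : ℕ)                -- y = right_{A,B} x
  | caseOf (y x₁ : ℕ) (M₁ : Tm α) (x₂ : ℕ) (M₂ : Tm α)     -- case y of {left x₁ → M₁ | right x₂ → M₂}
  | mkPair (x x₁ x₂ : ℕ)                                   -- x = (x₁, x₂)
  | unPair (x₁ x₂ x : ℕ)                                   -- (x₁, x₂) = x
  | fold (y : ℕ) (A : Ty α 1) (x : ℕ)                      -- y = fold_{μX.A} x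
  | unfold (y x : ℕ)                                       -- y = unfold x

/-- Variable contexts (lists of typed variables; `Γ, x : A` is `Γ.snoc x A`). -/
inductive Ctx (α : Type) : Type
  | nil
  | snoc (Γ : Ctx α) (x : ℕ) (A : Ty α 0)

/-- Term judgements `⊢ ⟨Γ⟩ M ⟨Δ⟩` (Figure: formation rules for terms). -/
inductive Tm.Wt {α} : Ctx α → Tm α → Ctx α → Prop
  | newunit {Γ : Ctx α} { u} : Tm.Wt Γ (.newunit u) (Γ.snoc u .unit)
  | discard {Γ : Ctx α} { x A} : Tm.Wt (Γ.snoc x A) (.discard x) Γ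
  | skip {Γ : Ctx α}  : Tm.Wt Γ .skip Γ
  | seq {Γ : Ctx α} { Γ' Δ M N} : Tm.Wt Γ M Γ' → Tm.Wt Γ' N Δ → Tm.Wt Γ (.seq M N) Δ
  | whileLoop {Γ : Ctx α} { b M} : Tm.Wt (Γ.snoc b .bit) M (Γ.snoc b .bit) →
      Tm.Wt (Γ.snoc b .bit) (.whileLoop b M) (Γ.snoc b .bit)
  | letLeft {Γ : Ctx α} { x y A B} : Tm.Wt (Γ.snoc x A) (.letLeft y A B x) (Γ.snoc y (.sum A B))
  | letRight {Γ : Ctx α} { x y A B} : Tm.Wt (Γ.snoc x B) (.letRight y A B x) (Γ.snoc y (.sum A B))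
  | caseOf {Γ : Ctx α} { Δ y x₁ x₂ A B M₁ M₂} : Tm.Wt (Γ.snoc x₁ A) M₁ Δ → Tm.Wt (Γ.snoc x₂ B) M₂ Δ →
      Tm.Wt (Γ.snoc y (.sum A B)) (.caseOf y x₁ M₁ x₂ M₂) Δ
  | mkPair {Γ : Ctx α} { x x₁ x₂ A B} :
      Tm.Wt ((Γ.snoc x₁ A).snoc x₂ B) (.mkPair x x₁ x₂) (Γ.snoc x (.tensor A B))
  | unPair {Γ : Ctx α} { x x₁ x₂ A B} :
      Tm.Wt (Γ.snoc x (.tensor A B)) (.unPair x₁ x₂ x) ((Γ.snoc x₁ A).snoc x₂ B)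
  | fold {Γ : Ctx α} { x y A} :
      Tm.Wt (Γ.snoc x (A.subst1 (.mu A))) (.fold y A x) (Γ.snoc y (.mu A))
  | unfold {Γ : Ctx α} { x y A} :
      Tm.Wt (Γ.snoc x (.mu A)) (.unfold y x) (Γ.snoc y (A.subst1 (.mu A)))

/-- Value assignments (`V, x = v` is `V.snoc x v`). -/
inductive VAssign (α : Type) : Type
  | nil
  | snoc (V : VAssign α) (x : ℕ) (v : Val α)

/-- Well-formed value assignments `Γ ⊢ V`. -/
inductive VAssign.Wt {α} : Ctx α → VAssign α → Prop
  | nil : VAssign.Wt .nil .nil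
  | snoc {Γ : Ctx α} { V x v A} : VAssign.Wt Γ V → Val.HasTy v A →
      VAssign.Wt (Γ.snoc x A) (V.snoc x v)

/-- The desugaring `if b then {N}` := `case b of {left u → b = left u | right u → b = right u; N}`
(here taking `u := b`). -/
def Tm.ifThen {α} (b : ℕ) (N : Tm α) : Tm α :=
  .caseOf b b (.letLeft b .unit .unit b) b (.seq (.letRight b .unit .unit b) N)

/-- Small step operational semantics on configurations `(M | V)`. -/
inductive Step {α} : Tm α × VAssign α → Tm α × VAssign α → Prop
  | newunit {u } {V : VAssign α} : Step (.newunit u, V) (.skip, V.snoc u .star)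
  | discard {x v } {V : VAssign α} : Step (.discard x, V.snoc x v) (.skip, V)
  | seqSkip {N } {V : VAssign α} : Step (.seq .skip N, V) (N, V)
  | seqStep {M M' N : Tm α} {V V' : VAssign α} : Step (M, V) (M', V') → Step (.seq M N, V) (.seq M' N, V')
  | whileLoop {b M v } {V : VAssign α} :
      Step (.whileLoop b M, V.snoc b v) (Tm.ifThen b (.seq M (.whileLoop b M)), V.snoc b v)
  | letLeft {y A B x v } {V : VAssign α} :
      Step (.letLeft y A B x, V.snoc x v) (.skip, V.snoc y (.inl A B v))
  | letRight {y A B x v } {V : VAssign α} :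
      Step (.letRight y A B x, V.snoc x v) (.skip, V.snoc y (.inr A B v))
  | caseLeft {y x₁ M₁ x₂ M₂ A B v } {V : VAssign α} :
      Step (.caseOf y x₁ M₁ x₂ M₂, V.snoc y (.inl A B v)) (M₁, V.snoc x₁ v)
  | caseRight {y x₁ M₁ x₂ M₂ A B v } {V : VAssign α} :
      Step (.caseOf y x₁ M₁ x₂ M₂, V.snoc y (.inr A B v)) (M₂, V.snoc x₂ v)
  | mkPair {x x₁ x₂ v₁ v₂ } {V : VAssign α} :
      Step (.mkPair x x₁ x₂, (V.snoc x₁ v₁).snoc x₂ v₂) (.skip, V.snoc x (.pair v₁ v₂))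
  | unPair {x x₁ x₂ v₁ v₂ } {V : VAssign α} :
      Step (.unPair x₁ x₂ x, V.snoc x (.pair v₁ v₂)) (.skip, (V.snoc x₁ v₁).snoc x₂ v₂)
  | fold {y A x v } {V : VAssign α} : Step (.fold y A x, V.snoc x v) (.skip, V.snoc y (.fold A v))
  | unfold {y x A v } {V : VAssign α} : Step (.unfold y x, V.snoc x (.fold A v)) (.skip, V.snoc y v)

/-!
Existence is proved by induction on the step, inverting the typing of the term and of the
value assignment in each rule; the one non-local case is the unrolling of `while`, whose
desugared `if` is typed by the loop invariant `b : bit`. Uniqueness holds because a value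
has at most one type, so a well-formed value assignment determines its context.
-/

theorem Val.HasTy.unique {α} {v : Val α} {A B : Ty α 0}
    (h : v.HasTy A) (h' : v.HasTy B) : A = B := by
  induction h generalizing B with
  | star | inl | inr | fold => cases h'; rfl
  | pair _ _ ih₁ ih₂ => cases h' with
    | pair h₁ h₂ => rw [ih₁ h₁, ih₂ h₂]

theorem VAssign.Wt.unique {α} {V : VAssign α} {Γ Γ' : Ctx α}
    (h : VAssign.Wt Γ V) (h' : VAssign.Wt Γ' V) : Γ = Γ' := by
  induction h generalizing Γ' with
  | nil => cases h'; rfl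
  | snoc _ hv ih => cases h' with
    | snoc hV' hv' => rw [ih hV', hv.unique hv']

theorem Tm.Wt.ifThen {α} {Γ : Ctx α} {b : ℕ} {N : Tm α}
    (hN : Tm.Wt (Γ.snoc b .bit) N (Γ.snoc b .bit)) :
    Tm.Wt (Γ.snoc b .bit) (Tm.ifThen b N) (Γ.snoc b .bit) :=
  .caseOf .letLeft (.seq .letRight hN)

theorem Step.exists_wt {α} {Γ Δ : Ctx α} {c c' : Tm α × VAssign α}
    (hstep : Step c c') (hM : Tm.Wt Γ c.1 Δ) (hV : VAssign.Wt Γ c.2) :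
    ∃ Γ' : Ctx α, Tm.Wt Γ' c'.1 Δ ∧ VAssign.Wt Γ' c'.2 := by
  induction hstep generalizing Γ Δ with
  | newunit => cases hM; exact ⟨_, .skip, hV.snoc .star⟩
  | discard => cases hM; cases hV with
    | snoc hV _ => exact ⟨_, .skip, hV⟩
  | seqSkip => cases hM with
    | seq hskip hN => cases hskip; exact ⟨_, hN, hV⟩
  | seqStep _ ih => cases hM with
    | seq hM hN =>
      obtain ⟨Γ', hM', hV'⟩ := ih hM hV
      exact ⟨Γ', hM'.seq hN, hV'⟩
  | whileLoop => cases hM with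
    | whileLoop hbody => exact ⟨_, Tm.Wt.ifThen (hbody.seq (.whileLoop hbody)), hV⟩
  | letLeft => cases hM; cases hV with
    | snoc hV hv => exact ⟨_, .skip, hV.snoc hv.inl⟩
  | letRight => cases hM; cases hV with
    | snoc hV hv => exact ⟨_, .skip, hV.snoc hv.inr⟩
  | caseLeft => cases hM with
    | caseOf hM₁ _ => cases hV with
      | snoc hV hv => cases hv with
        | inl hv => exact ⟨_, hM₁, hV.snoc hv⟩
  | caseRight => cases hM with
    | caseOf _ hM₂ => cases hV with
      | snoc hV hv => cases hv with
        | inr hv => exact ⟨_, hM₂, hV.snoc hv⟩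
  | mkPair => cases hM; cases hV with
    | snoc hV hv₂ => cases hV with
      | snoc hV hv₁ => exact ⟨_, .skip, hV.snoc (hv₁.pair hv₂)⟩
  | unPair => cases hM; cases hV with
    | snoc hV hv => cases hv with
      | pair hv₁ hv₂ => exact ⟨_, .skip, (hV.snoc hv₁).snoc hv₂⟩
  | fold => cases hM; cases hV with
    | snoc hV hv => exact ⟨_, .skip, hV.snoc hv.fold⟩
  | unfold => cases hM; cases hV with
    | snoc hV hv => cases hv with
      | fold hv => exact ⟨_, .skip, hV.snoc hv⟩

/-- **Subject reduction.** If `Γ; Δ ⊢ (M | V)` is a well-formed configuration and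
`(M | V) ⤳ (M' | V')`, then `Γ'; Δ ⊢ (M' | V')` for a (necessarily unique)
context `Γ'`. -/
theorem subject_reduction {α} {Γ Δ : Ctx α} {M M' : Tm α} {V V' : VAssign α}
    (hM : Tm.Wt Γ M Δ) (hV : VAssign.Wt Γ V)
    (hstep : Step (M, V) (M', V')) :
    ∃! Γ' : Ctx α, Tm.Wt Γ' M' Δ ∧ VAssign.Wt Γ' V' := by
  obtain ⟨Γ', hM', hV'⟩ := hstep.exists_wt hM hV
  exact ⟨Γ', ⟨hM', hV'⟩, fun _ h => h.2.unique hV'⟩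
end

section
/- In the operational semantics of the first-order affine language, progress holds: every well-formed configuration C is either terminal (its term component is skip) or there exists a configuration D with C ⤳ D. Moreover the small-step relation is deterministic: the successor D, if it exists, is unique. -/
/-! Progress holds because typing forces the value assignment to end in exactly the
variables the next instruction consumes, and canonical forms fix the shape of their values;
determinism holds because the redex of every configuration is its head instruction (or, for
`M ; N`, the redex of `M`, and `skip` has none). -/

variable {α : Type}

namespace Val.HasTy

variable {v : Val α}

theorem exists_eq_inl_or_inr {A B : Ty α 0} (h : HasTy v (.sum A B)) :
    (∃ w, v = .inl A B w) ∨ ∃ w, v = .inr A B w := by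
  cases h with
  | inl => exact .inl ⟨_, rfl⟩
  | inr => exact .inr ⟨_, rfl⟩

theorem exists_eq_pair {A B : Ty α 0} (h : HasTy v (.tensor A B)) :
    ∃ w₁ w₂, v = .pair w₁ w₂ := by
  cases h
  exact ⟨_, _, rfl⟩

theorem exists_eq_fold {A : Ty α 1} (h : HasTy v (.mu A)) : ∃ w, v = .fold A w := by
  cases h
  exact ⟨_, rfl⟩

end Val.HasTy

theorem VAssign.Wt.exists_eq_snoc {Γ : Ctx α} {x : ℕ} {A : Ty α 0} {V : VAssign α}
    (h : VAssign.Wt (Γ.snoc x A) V) :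
    ∃ V' v, V = V'.snoc x v ∧ VAssign.Wt Γ V' ∧ Val.HasTy v A := by
  cases h with
  | snoc hV hv => exact ⟨_, _, rfl, hV, hv⟩

theorem Tm.Wt.progress {Γ Δ : Ctx α} {M : Tm α} {V : VAssign α}
    (hM : Tm.Wt Γ M Δ) (hV : VAssign.Wt Γ V) :
    M = .skip ∨ ∃ D, Step (M, V) D := by
  induction hM generalizing V with
  | skip => exact .inl rfl
  | newunit => exact .inr ⟨_, .newunit⟩
  | seq _ _ ih _ =>
    rcases ih hV with rfl | ⟨_, hstep⟩
    · exact .inr ⟨_, .seqSkip⟩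
    · exact .inr ⟨_, .seqStep hstep⟩
  | caseOf =>
    obtain ⟨V, v, rfl, -, hv⟩ := hV.exists_eq_snoc
    rcases hv.exists_eq_inl_or_inr with ⟨w, rfl⟩ | ⟨w, rfl⟩
    · exact .inr ⟨_, .caseLeft⟩
    · exact .inr ⟨_, .caseRight⟩
  | mkPair =>
    obtain ⟨V, v₂, rfl, hV, -⟩ := hV.exists_eq_snoc
    obtain ⟨V, v₁, rfl, -, -⟩ := hV.exists_eq_snoc
    exact .inr ⟨_, .mkPair⟩
  | unPair =>
    obtain ⟨V, v, rfl, -, hv⟩ := hV.exists_eq_snoc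
    obtain ⟨w₁, w₂, rfl⟩ := hv.exists_eq_pair
    exact .inr ⟨_, .unPair⟩
  | unfold =>
    obtain ⟨V, v, rfl, -, hv⟩ := hV.exists_eq_snoc
    obtain ⟨w, rfl⟩ := hv.exists_eq_fold
    exact .inr ⟨_, .unfold⟩
  | discard | whileLoop | letLeft | letRight | fold =>
    obtain ⟨V, v, rfl, -, -⟩ := hV.exists_eq_snoc
    exact .inr ⟨_, by constructor⟩

theorem Step.not_skip {V : VAssign α} {D : Tm α × VAssign α} : ¬ Step (.skip, V) D := nofun

theorem Step.rightUnique : Relator.RightUnique (@Step α) := by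
  intro C D D' h
  induction h generalizing D' with
  | seqSkip =>
    intro h'
    cases h' with
    | seqSkip => rfl
    | seqStep h' => exact absurd h' Step.not_skip
  | seqStep h ih =>
    intro h'
    cases h' with
    | seqSkip => exact absurd h Step.not_skip
    | seqStep h' => cases ih h'; rfl
  | _ => intro h'; cases h'; rfl

/-- **Progress and determinism.** Every well-formed configuration `Γ; Δ ⊢ (M | V)` is
either terminal (its term component is `skip`) or has a successor under the small-step
relation; moreover the small-step relation is deterministic, so the successor is
unique. -/
theorem progress_and_determinism {α} :
    (∀ {Γ Δ : Ctx α} {M : Tm α} {V : VAssign α},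
        Tm.Wt Γ M Δ → VAssign.Wt Γ V →
        M = Tm.skip ∨ ∃ D : Tm α × VAssign α, Step (M, V) D) ∧
    (∀ (C D D' : Tm α × VAssign α), Step C D → Step C D' → D = D') :=
  ⟨Tm.Wt.progress, fun _ _ _ h h' => Step.rightUnique h h'⟩
end
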